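/- arXiv:2603.19365 — 2 statements merged into one kernel-verified Lean document; each statement's English description precedes it below -/
import Mathlib

section
/- Let Γ be a linearly ordered additive commutative group and let L be a field equipped with an additive valuation v : L → WithTop Γ (so v(ab) = v(a) + v(b), v(a+b) ≥ min(v(a),v(b)), v(0) = ⊤, v(1) = 0). Let k ≥ 1 and let b₁,…,b_k ∈ L, not all zero. Let m := min_{1 ≤ i ≤ k} v(bᵢ) (which is then an element of Γ, not ⊤), and let s := #{i : v(bᵢ) = m}, so 1 ≤ s ≤ k. Then v(e_s(b₁,…,b_k)) = s•m. -/
/-- `j`-th elementary symmetric function of `b 0, …, b (k-1)`: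
the sum of all products of `j` of them with distinct indices (`e₀ = 1`). -/
def esym {A : Type*} [CommSemiring A] {k : ℕ} (b : Fin k → A) (j : ℕ) : A :=
  ∑ T ∈ Finset.powersetCard j Finset.univ, ∏ i ∈ T, b i

/-!
Let `S` be the set of indices where `v (b i)` attains its minimum `m`. Among the terms
`∏ i ∈ T, b i` of `e_{#S}`, the term `T = S` has valuation exactly `#S • m`, while every other
`T` of the same size contains an index outside `S` and so has strictly larger valuation.
Hence the valuation of the sum is that of its unique dominant term.
-/

open Finset

theorem WithTop.card_nsmul_lt_sum {Γ : Type*} [AddCommMonoid Γ] [LinearOrder Γ]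
    [IsOrderedCancelAddMonoid Γ] {ι : Type*} {T : Finset ι} {f : ι → WithTop Γ} {m : Γ}
    (hle : ∀ i ∈ T, (m : WithTop Γ) ≤ f i) (hlt : ∃ j ∈ T, (m : WithTop Γ) < f j) :
    #T • (m : WithTop Γ) < ∑ i ∈ T, f i := by
  classical
  obtain ⟨j, hjT, hj⟩ := hlt
  rw [← add_sum_erase _ _ hjT, ← card_erase_add_one hjT, succ_nsmul']
  refine WithTop.add_lt_add_of_lt_of_le ?_ hj
    (card_nsmul_le_sum _ _ _ fun i hi => hle i (mem_of_mem_erase hi))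
  rw [← WithTop.coe_nsmul]
  exact WithTop.coe_ne_top

namespace AddValuation

variable {R : Type*} [CommRing R] {ι : Type*}

section LinearOrderedAddCommMonoidWithTop

variable {Γ₀ : Type*} [LinearOrderedAddCommMonoidWithTop Γ₀] (v : AddValuation R Γ₀)

theorem map_prod (f : ι → R) (T : Finset ι) : v (∏ i ∈ T, f i) = ∑ i ∈ T, v (f i) := by
  classical
  induction T using Finset.induction with
  | empty => simp [map_one]
  | insert i T hi ih => rw [prod_insert hi, sum_insert hi, map_mul, ih]

theorem map_prod_of_forall_eq {f : ι → R} {T : Finset ι} {g : Γ₀}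
    (hT : ∀ i ∈ T, v (f i) = g) :
    v (∏ i ∈ T, f i) = #T • g := by
  rw [map_prod, sum_congr rfl hT, sum_const]

end LinearOrderedAddCommMonoidWithTop

section WithTop

variable {Γ : Type*} [AddCancelCommMonoid Γ] [LinearOrder Γ] [IsOrderedCancelAddMonoid Γ]
  (v : AddValuation R (WithTop Γ)) {b : ι → R} {m : Γ} {S : Finset ι}

theorem nsmul_lt_map_prod_of_card_eq_of_ne (hm : ∀ i, (m : WithTop Γ) ≤ v (b i))
    (hS : ∀ i, v (b i) = m → i ∈ S) {T : Finset ι} (hT : #T = #S) (hne : T ≠ S) :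
    #S • (m : WithTop Γ) < v (∏ i ∈ T, b i) := by
  have hTS : ¬ T ⊆ S := fun h => hne (eq_of_subset_of_card_le h hT.ge)
  obtain ⟨j, hjT, hjS⟩ := not_subset.mp hTS
  rw [map_prod, ← hT]
  exact WithTop.card_nsmul_lt_sum (fun i _ => hm i)
    ⟨j, hjT, (hm j).lt_of_ne fun h => hjS (hS j h.symm)⟩

theorem map_sum_powersetCard_prod [Fintype ι] (hm : ∀ i, (m : WithTop Γ) ≤ v (b i))
    (hS : ∀ i, i ∈ S ↔ v (b i) = m) :
    v (∑ T ∈ powersetCard #S univ, ∏ i ∈ T, b i) = #S • (m : WithTop Γ) := by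
  classical
  have hS_mem : S ∈ powersetCard #S univ := mem_powersetCard.mpr ⟨subset_univ S, rfl⟩
  have hvS := v.map_prod_of_forall_eq fun i hi => (hS i).mp hi
  have hrest :
      #S • (m : WithTop Γ) < v (∑ T ∈ (powersetCard #S univ).erase S, ∏ i ∈ T, b i) := by
    refine map_lt_sum v (by rw [← WithTop.coe_nsmul]; exact WithTop.coe_ne_top) fun T hT => ?_
    obtain ⟨hTS, hT⟩ := mem_erase.mp hT
    exact v.nsmul_lt_map_prod_of_card_eq_of_ne hm (fun i => (hS i).mpr)
      (mem_powersetCard.mp hT).2 hTS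
  rw [← add_sum_erase _ _ hS_mem, map_add_eq_of_lt_left v (hvS ▸ hrest), hvS]

end WithTop

end AddValuation

theorem valuation_esymm_min_general
    {Γ : Type*} [AddCommGroup Γ] [LinearOrder Γ] [IsOrderedAddMonoid Γ] {L : Type*} [Field L]
    (v : L → WithTop Γ)
    (hv_mul : ∀ a b : L, v (a * b) = v a + v b)
    (hv_add : ∀ a b : L, min (v a) (v b) ≤ v (a + b))
    (hv_zero : v 0 = ⊤) (hv_one : v 1 = 0)
    (k : ℕ) (b : Fin k → L)
    (m : Γ) (hm : (m : WithTop Γ) = Finset.univ.inf (fun i => v (b i))) :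
    v (esym b (Nat.card {i : Fin k // v (b i) = (m : WithTop Γ)})) =
      ((Nat.card {i : Fin k // v (b i) = (m : WithTop Γ)} • m : Γ) : WithTop Γ) := by
  set w := AddValuation.of v hv_zero hv_one hv_add hv_mul
  have hm_le : ∀ i, (m : WithTop Γ) ≤ w (b i) := fun i => hm ▸ inf_le (mem_univ i)
  have hcard : Nat.card {i : Fin k // v (b i) = (m : WithTop Γ)} =
      #(univ.filter fun i => v (b i) = (m : WithTop Γ)) := by
    rw [Nat.card_eq_fintype_card, Fintype.card_subtype]
  rw [hcard, WithTop.coe_nsmul]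
  exact AddValuation.map_sum_powersetCard_prod w hm_le fun i => by simp [w]

/-- Newton-polygon step: if `m` is the minimal valuation of `b₁, …, b_k`
(not all zero, so `m ∈ Γ`) and `s` is the number of indices realizing the
minimum, then `v(e_s(b₁,…,b_k)) = s • m` (no cancellation occurs). -/
theorem valuation_esymm_min
    {Γ : Type*} [AddCommGroup Γ] [LinearOrder Γ] [IsOrderedAddMonoid Γ] {L : Type*} [Field L]
    (v : L → WithTop Γ)
    (hv_mul : ∀ a b : L, v (a * b) = v a + v b)
    (hv_add : ∀ a b : L, min (v a) (v b) ≤ v (a + b))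
    (hv_zero : v 0 = ⊤) (hv_one : v 1 = 0)
    (k : ℕ) (hk : 1 ≤ k) (b : Fin k → L) (hb : ∃ i, b i ≠ 0)
    (m : Γ) (hm : (m : WithTop Γ) = Finset.univ.inf (fun i => v (b i))) :
    v (esym b (Nat.card {i : Fin k // v (b i) = (m : WithTop Γ)})) =
      ((Nat.card {i : Fin k // v (b i) = (m : WithTop Γ)} • m : Γ) : WithTop Γ) :=
  valuation_esymm_min_general v hv_mul hv_add hv_zero hv_one k b m hm
end

section
/- Let K be a field of characteristic zero, s ≥ 0, R := K⟦u₁,…,u_s⟧ = MvPowerSeries (Fin s) K, k ≥ 2, n := k−1, and let b₁,…,b_k ∈ R((t))⟦x₁,…,x_n⟧ with coefficients c_{i,α} := coeff α bᵢ ∈ R((t)) satisfy: (i) for every i and α, t^{|α|}·c_{i,α} ∈ R⟦t⟧; (ii) for 1 ≤ i ≤ n, c_{i,0} = 0 and c_{i,eⱼ} = 1 if j = i and 0 if j ≠ i; (iii) b_k = −(b₁ + ⋯ + b_n); (iv) for every j = 1,…,k and every α, coeff α (e_j(b₁,…,b_k)) ∈ R⟦t⟧. For each i define supp(bᵢ)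 := {(α,β) ∈ ℕⁿ × ℤ : the coefficient of t^β in the Laurent series c_{i,α} is a nonzero element of R}, and order ℕⁿ × ℤ by comparing the triples (|α|+β, |α|, α) lexicographically, where α ∈ ℕⁿ is itself compared in the lexicographic order. Then for each 1 ≤ i ≤ n, supp(bᵢ) has a least element, equal to (eᵢ, 0), and supp(b_k) has a least element, equal to (e_n, 0), where eᵢ ∈ ℕⁿ denotes the i-th standard basis vector. -/
/-- A Laurent series lies in `R⟦t⟧` iff it has no nonzero coefficients in negative degrees. -/
def memPowerSeries {R : Type*} [CommRing R] (c : LaurentSeries R) : Prop :=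
  ∀ m : ℤ, m < 0 → c.coeff m = 0

/-- Lexicographic order on exponents `α ∈ ℕⁿ` (coordinates compared from the first). -/
def lexLE {n : ℕ} (γ α : Fin n →₀ ℕ) : Prop :=
  γ = α ∨ ∃ j : Fin n, (∀ l : Fin n, l < j → γ l = α l) ∧ γ j < α j

/-- The ordering `lex (|α| + β, |α|, α)` on `ℕⁿ × ℤ` from the proof of Lemma 4.1. -/
def keyLE {n : ℕ} (q q' : (Fin n →₀ ℕ) × ℤ) : Prop :=
  ((∑ l, q.1 l : ℕ) + q.2 < (∑ l, q'.1 l : ℕ) + q'.2) ∨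
    ((∑ l, q.1 l : ℕ) + q.2 = (∑ l, q'.1 l : ℕ) + q'.2 ∧
      ((∑ l, q.1 l) < (∑ l, q'.1 l) ∨
        ((∑ l, q.1 l) = (∑ l, q'.1 l) ∧ lexLE q.1 q'.1)))

/-- The support of `bᵢ ∈ R((t))⟦x⟧`: pairs `(α, β)` such that the coefficient of
`t^β` in the Laurent series `coeff α bᵢ` is nonzero. -/
def suppOf {R : Type*} [CommRing R] {n : ℕ}
    (F : MvPowerSeries (Fin n) (LaurentSeries R)) : Set ((Fin n →₀ ℕ) × ℤ) :=
  {q | (MvPowerSeries.coeff q.1 F).coeff q.2 ≠ 0}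

open Finset

section esym

variable {A : Type*}

theorem map_esym {B : Type*} [CommSemiring A] [CommSemiring B] (f : A →+* B) {k : ℕ}
    (b : Fin k → A) (j : ℕ) : f (esym b j) = esym (f ∘ b) j := by
  simp [esym, map_prod]

theorem esym_const_zero [CommSemiring A] {k j : ℕ} (hj : j ≠ 0) :
    esym (fun _ : Fin k ↦ (0 : A)) j = 0 :=
  sum_eq_zero fun _ hT ↦
    have ⟨_, hi⟩ := card_pos.mp ((mem_powersetCard.mp hT).2.symm ▸ Nat.pos_of_ne_zero hj)
    prod_eq_zero hi rfl

open Polynomial in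
theorem pow_eq_zero_of_esym_eq_zero [CommRing A] {k : ℕ} (β : Fin k → A)
    (h : ∀ j, 1 ≤ j → j ≤ k → esym β j = 0) (m : Fin k) : β m ^ k = 0 := by
  have hprod : ∏ i, (X - C (β i)) = X ^ k := by
    have vieta := Multiset.prod_X_sub_X_eq_sum_esymm (univ.val.map β)
    rw [Multiset.map_map, Function.comp_def] at vieta
    rw [prod_eq_multiset_prod, vieta, Multiset.card_map, card_val, card_univ, Fintype.card_fin,
      sum_range_succ', sum_eq_zero fun j hj ↦ ?_]
    · simp [Multiset.esymm]
    rw [esymm_map_val, ← esym, h (j + 1) (by omega) (by simpa using hj)]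
    simp
  have := congrArg (eval (β m)) hprod
  rw [eval_prod, prod_eq_zero (mem_univ m) (by simp)] at this
  simpa using this.symm

theorem eq_zero_of_esym_eq_zero [CommRing A] [NoZeroDivisors A] {k : ℕ}
    (β : Fin k → A) (h : ∀ j, 1 ≤ j → j ≤ k → esym β j = 0) (m : Fin k) : β m = 0 :=
  (pow_eq_zero_iff (Fin.pos m).ne').mp (pow_eq_zero_of_esym_eq_zero β h m)

end esym

namespace HahnSeries

variable {Γ R : Type*} [AddCommMonoid Γ] [LinearOrder Γ] [IsOrderedCancelAddMonoid Γ]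
  [NonUnitalNonAssocSemiring R]

theorem coeff_mul_of_le_orderTop {x y : R⟦Γ⟧} {a b : Γ} (ha : a ≤ x.orderTop)
    (hb : b ≤ y.orderTop) : (x * y).coeff (a + b) = x.coeff a * y.coeff b := by
  have hx {i : Γ} (hi : x.coeff i ≠ 0) : a ≤ i :=
    not_lt.mp fun h ↦ hi (coeff_eq_zero_of_lt_orderTop ((WithTop.coe_lt_coe.mpr h).trans_le ha))
  have hy {j : Γ} (hj : y.coeff j ≠ 0) : b ≤ j :=
    not_lt.mp fun h ↦ hj (coeff_eq_zero_of_lt_orderTop ((WithTop.coe_lt_coe.mpr h).trans_le hb))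
  rw [coeff_mul]
  refine sum_eq_single (a, b) (fun ⟨i, j⟩ hij hne ↦ ?_) (fun h ↦ ?_)
  · obtain ⟨hi, hj, hsum⟩ := mem_antidiagonal.mp hij
    rcases (hx hi).lt_or_eq with hai | rfl
    · exact absurd hsum (add_lt_add_of_lt_of_le hai (hy hj)).ne'
    · exact absurd (congrArg _ (add_left_cancel hsum)) hne
  · by_contra hne
    exact h (mem_antidiagonal.mpr ⟨left_ne_zero_of_mul hne, right_ne_zero_of_mul hne, rfl⟩)

end HahnSeries

theorem neg_le_orderTop_of_memPowerSeries_single_mul {R : Type*} [CommRing R]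
    {c : LaurentSeries R} {d : ℕ} (h : memPowerSeries (HahnSeries.single (d : ℤ) 1 * c)) :
    ((-d : ℤ) : WithTop ℤ) ≤ c.orderTop :=
  HahnSeries.le_orderTop_iff_forall.mpr fun m hm ↦ by
    simpa [HahnSeries.coeff_single_mul_add] using
      h (m + d) (by have := WithTop.coe_lt_coe.mp hm; omega)

theorem lexLE_single_single {n : ℕ} {i j : Fin n} (h : j ≤ i) :
    lexLE (Finsupp.single i 1) (Finsupp.single j 1) := by
  rcases h.lt_or_eq with h | rfl
  · refine Or.inr ⟨j, fun l hl ↦ ?_, ?_⟩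
    · simp [hl.ne', (hl.trans h).ne']
    · simp [h.ne']
  · exact Or.inl rfl

namespace MvPowerSeries

section weight

variable (σ R : Type*) [CommRing R]

/-- Series in `R((t))⟦x⟧` without monomials `x^α t^m` of negative weight `|α| + m`. -/
def nonnegWeight : Subring (MvPowerSeries σ (LaurentSeries R)) where
  carrier := {F | ∀ α : σ →₀ ℕ, ((-α.degree : ℤ) : WithTop ℤ) ≤ (coeff α F).orderTop}
  zero_mem' α := by simp
  one_mem' α := by
    classical
    refine HahnSeries.le_orderTop_iff_forall.mpr fun m hm ↦ ?_
    rw [coeff_one]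
    split_ifs with h
    · subst h
      rw [HahnSeries.coeff_one, if_neg (by simp at hm; omega)]
    · rfl
  add_mem' {F G} hF hG α := by
    rw [map_add]
    exact (le_min (hF α) (hG α)).trans HahnSeries.min_orderTop_le_orderTop_add
  neg_mem' {F} hF α := by
    rw [map_neg, HahnSeries.orderTop_neg]
    exact hF α
  mul_mem' {F G} hF hG α := by
    classical
    refine HahnSeries.le_orderTop_iff_forall.mpr fun m hm ↦ ?_
    rw [coeff_mul, HahnSeries.coeff_sum]
    refine sum_eq_zero fun p hp ↦ HahnSeries.coeff_eq_zero_of_lt_orderTop (hm.trans_le ?_)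
    rw [← mem_antidiagonal.mp hp, map_add, Nat.cast_add, neg_add, WithTop.coe_add]
    exact (add_le_add (hF p.1) (hG p.2)).trans HahnSeries.orderTop_add_le_mul

noncomputable def weightZero : nonnegWeight σ R →+* MvPowerSeries σ R where
  toFun F α := (coeff α F.1).coeff (-α.degree)
  map_one' := by
    classical
    ext α
    change (coeff α (1 : MvPowerSeries σ (LaurentSeries R))).coeff _ =
      coeff α (1 : MvPowerSeries σ R)
    rw [coeff_one, coeff_one]
    split_ifs with h
    · simp [h]
    · rfl
  map_mul' F G := by
    classical
    ext α
    change (coeff α (F.1 * G.1)).coeff _ = ∑ p ∈ antidiagonal α,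
      (coeff p.1 F.1).coeff (-p.1.degree) * (coeff p.2 G.1).coeff (-p.2.degree)
    rw [coeff_mul, HahnSeries.coeff_sum]
    refine sum_congr rfl fun p hp ↦ ?_
    rw [← mem_antidiagonal.mp hp, map_add, Nat.cast_add, neg_add]
    exact HahnSeries.coeff_mul_of_le_orderTop (F.2 p.1) (G.2 p.2)
  map_zero' := rfl
  map_add' _ _ := rfl

variable {σ R}

@[simp]
theorem coeff_weightZero (F : nonnegWeight σ R) (α : σ →₀ ℕ) :
    coeff α (weightZero σ R F) = (coeff α F.1).coeff (-α.degree) := rfl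

theorem esym_weightZero_eq_zero {k : ℕ} (b : Fin k → nonnegWeight σ R)
    (hb : ∀ i, constantCoeff (b i : MvPowerSeries σ (LaurentSeries R)) = 0) {j : ℕ} (hj : j ≠ 0)
    (h : ∀ α, memPowerSeries
      (coeff α (esym (fun i ↦ (b i : MvPowerSeries σ (LaurentSeries R))) j))) :
    esym (weightZero σ R ∘ b) j = 0 := by
  have hval : ((esym b j : nonnegWeight σ R) : MvPowerSeries σ (LaurentSeries R)) =
      esym (fun i ↦ (b i : MvPowerSeries σ (LaurentSeries R))) j :=
    map_esym (nonnegWeight σ R).subtype b j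
  rw [← map_esym]
  ext α
  rw [coeff_weightZero, hval, map_zero]
  rcases eq_or_ne α 0 with rfl | hα
  · rw [coeff_zero_eq_constantCoeff_apply, map_esym]
    simp [Function.comp_def, hb, esym_const_zero hj]
  · have := Nat.pos_of_ne_zero ((Finsupp.degree_eq_zero_iff α).not.mpr hα)
    exact h α _ (by omega)

end weight

variable {R : Type*} [CommRing R] {n : ℕ}

theorem one_le_weight_of_mem_suppOf {F : MvPowerSeries (Fin n) (LaurentSeries R)}
    (hF : F ∈ nonnegWeight (Fin n) R) (hW : weightZero _ _ ⟨F, hF⟩ = 0) {q}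
    (hq : q ∈ suppOf F) : 1 ≤ (q.1.degree : ℤ) + q.2 := by
  have hle : -(q.1.degree : ℤ) ≤ q.2 := not_lt.mp fun h ↦
    hq (HahnSeries.coeff_eq_zero_of_lt_orderTop ((WithTop.coe_lt_coe.mpr h).trans_le (hF q.1)))
  have hne : q.2 ≠ -(q.1.degree : ℤ) := fun h ↦
    hq (h ▸ coeff_weightZero ⟨F, hF⟩ q.1 ▸ congrArg (coeff q.1) hW)
  omega

theorem keyLE_single_of_mem_suppOf {F : MvPowerSeries (Fin n) (LaurentSeries R)}
    (hF : F ∈ nonnegWeight (Fin n) R) (hW : weightZero _ _ ⟨F, hF⟩ = 0) (h0 : coeff 0 F = 0)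
    {i : Fin n} (hlex : ∀ j, (coeff (Finsupp.single j 1) F).coeff 0 ≠ 0 → j ≤ i)
    {q} (hq : q ∈ suppOf F) : keyLE (Finsupp.single i 1, 0) q := by
  obtain ⟨α, m⟩ := q
  have hweight := one_le_weight_of_mem_suppOf hF hW hq
  simp only [keyLE, ← Finsupp.degree_eq_sum, Finsupp.degree_single] at hweight ⊢
  push_cast
  rcases hweight.lt_or_eq with hlt | heq
  · exact Or.inl (by omega)
  refine Or.inr ⟨by omega, ?_⟩
  rcases Nat.lt_trichotomy α.degree 1 with hdeg | hdeg | hdeg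
  · obtain rfl := (Finsupp.degree_eq_zero_iff α).mp (by omega)
    exact absurd (by simp [h0]) hq
  · obtain ⟨j, rfl⟩ : α ∈ Set.range fun a ↦ Finsupp.single a 1 :=
      Finsupp.range_single_one ▸ hdeg
    obtain rfl : m = 0 := by omega
    exact Or.inr ⟨hdeg.symm, lexLE_single_single (hlex j hq)⟩
  · exact Or.inl hdeg

end MvPowerSeries

open MvPowerSeries

/-- The Claim in the proof of Lemma 4.1: under the hypotheses of the lemma, with
respect to the ordering `lex (|α|+β, |α|, α)`, the least element of the support
of `bᵢ` is `(eᵢ, 0)` for `i = 1, …, k−1`, and the least element of the support of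
`b_k` is `(e_{k−1}, 0)`. -/
theorem lemma_claim_least_support
    (K : Type*) [Field K] (s k n : ℕ) (hk : 2 ≤ k) (hn : n = k - 1)
    (b : Fin k → MvPowerSeries (Fin n) (LaurentSeries (MvPowerSeries (Fin s) K)))
    (hsupp : ∀ (i : Fin k) (α : Fin n →₀ ℕ),
      memPowerSeries
        (HahnSeries.single (((∑ l, α l) : ℕ) : ℤ) (1 : MvPowerSeries (Fin s) K) *
          MvPowerSeries.coeff α (b i)))
    (hlin : ∀ i : Fin n,
      MvPowerSeries.coeff 0
          (b (Fin.castLE (by omega) i)) = 0 ∧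
      ∀ j : Fin n,
        MvPowerSeries.coeff (Finsupp.single j 1)
            (b (Fin.castLE (by omega) i)) = if j = i then 1 else 0)
    (hsum : b ⟨k - 1, by omega⟩ = -(∑ i : Fin n, b (Fin.castLE (by omega) i)))
    (hesymm : ∀ j, 1 ≤ j → j ≤ k → ∀ α : Fin n →₀ ℕ,
      memPowerSeries
        (MvPowerSeries.coeff α (esym b j))) :
    (∀ i : Fin n,
      (Finsupp.single i 1, (0 : ℤ)) ∈ suppOf (b (Fin.castLE (by omega) i)) ∧
      ∀ q ∈ suppOf (b (Fin.castLE (by omega) i)), keyLE (Finsupp.single i 1, (0 : ℤ)) q) ∧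
    ((Finsupp.single (⟨n - 1, by omega⟩ : Fin n) 1, (0 : ℤ)) ∈ suppOf (b ⟨k - 1, by omega⟩) ∧
      ∀ q ∈ suppOf (b ⟨k - 1, by omega⟩),
        keyLE (Finsupp.single (⟨n - 1, by omega⟩ : Fin n) 1, (0 : ℤ)) q) := by
  have hb (i : Fin k) : b i ∈ nonnegWeight (Fin n) _ := fun α ↦
    neg_le_orderTop_of_memPowerSeries_single_mul (by simpa [Finsupp.degree_eq_sum] using hsupp i α)
  have hb0 (i : Fin k) : coeff 0 (b i) = 0 := by
    rcases lt_or_ge i.val n with hi | hi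
    · exact (hlin ⟨i, hi⟩).1
    · rw [show i = ⟨k - 1, by omega⟩ from Fin.ext (show (i : ℕ) = k - 1 by omega), hsum,
        map_neg, map_sum, sum_eq_zero fun i _ ↦ (hlin i).1, neg_zero]
  have hW (i : Fin k) : weightZero _ _ ⟨b i, hb i⟩ = 0 :=
    eq_zero_of_esym_eq_zero _ (fun j hj hjk ↦ esym_weightZero_eq_zero (fun i ↦ ⟨b i, hb i⟩)
      (fun i ↦ by simpa using hb0 i) (by omega) (hesymm j hj hjk)) i
  have hlast (j : Fin n) : coeff (Finsupp.single j 1) (b ⟨k - 1, by omega⟩) = -1 := by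
    simp [hsum, fun i ↦ (hlin i).2]
  refine ⟨fun i ↦ ⟨?_, fun q ↦ keyLE_single_of_mem_suppOf (hb _) (hW _) (hb0 _) fun j hj ↦ ?_⟩,
    ?_, fun q ↦ keyLE_single_of_mem_suppOf (hb _) (hW _) (hb0 _) fun j _ ↦ ?_⟩
  · simp [suppOf, (hlin i).2]
  · rw [(hlin i).2 j] at hj
    split_ifs at hj with hji
    exacts [hji.le, absurd rfl hj]
  · simp [suppOf, hlast]
  · exact Fin.le_iff_val_le_val.mpr (Nat.le_sub_one_of_lt j.isLt)
end
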